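/- arXiv:1901.10682 — 2 statements merged into one kernel-verified Lean document; each statement's English description precedes it below -/
import Mathlib

section
/- In the Euclidean case (ω(x) = ‖x‖²/2, so D(u,z) = ‖u−z‖²/2, α = 1) on U = ℝ^d: if x = z − γξ and z₊ = z − γζ, then for every u ∈ ℝ^d, γ⟨ζ, x−u⟩ ≤ (1/2)‖u−z‖² − (1/2)‖u−z₊‖² + γ²‖ξ−ζ‖² − (1/2)(‖x−z‖² + ‖x−z₊‖²). -/
/-!
The inequality is in fact an identity. Since `z - z₊ = γ ζ`, the left side is `⟪z - z₊, x - u⟫`,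
which the four-point polarization identity expresses through the squared distances between
`z, z₊` and `x, u`; the only cross term left over is `½‖x - z₊‖²`, and `x - z₊ = γ (ζ - ξ)`.
-/

open scoped RealInnerProductSpace

section FourPoint

variable {E : Type*} [NormedAddCommGroup E] [InnerProductSpace ℝ E]

theorem two_mul_inner_sub_sub_eq (a b c d : E) :
    2 * ⟪a - b, c - d⟫ = ‖a - d‖ ^ 2 + ‖b - c‖ ^ 2 - ‖a - c‖ ^ 2 - ‖b - d‖ ^ 2 := by
  simp only [norm_sub_sq_real, inner_sub_left, inner_sub_right,
    real_inner_comm c b, real_inner_comm d b]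
  ring

theorem extragradient_identity (γ : ℝ) (z x zplus ξ ζ u : E)
    (hx : x = z - γ • ξ) (hzplus : zplus = z - γ • ζ) :
    γ * ⟪ζ, x - u⟫ =
      (1 / 2) * ‖u - z‖ ^ 2 - (1 / 2) * ‖u - zplus‖ ^ 2 + γ ^ 2 * ‖ξ - ζ‖ ^ 2
        - (1 / 2) * (‖x - z‖ ^ 2 + ‖x - zplus‖ ^ 2) := by
  have hstep : z - zplus = γ • ζ := by rw [hzplus, sub_sub_cancel]
  have hgap : ‖x - zplus‖ ^ 2 = γ ^ 2 * ‖ξ - ζ‖ ^ 2 := by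
    rw [hx, hzplus, sub_sub_sub_cancel_left, ← smul_sub, norm_smul, mul_pow, Real.norm_eq_abs,
      sq_abs, norm_sub_rev]
  have hpolar := two_mul_inner_sub_sub_eq z zplus x u
  rw [hstep, real_inner_smul_left, norm_sub_rev z u, norm_sub_rev zplus x,
    norm_sub_rev z x, norm_sub_rev zplus u] at hpolar
  linarith

end FourPoint

theorem euclidean_extragradient_lemma_general {d : ℕ}
    (γ : ℝ)
    (z x zplus ξ ζ : EuclideanSpace ℝ (Fin d))
    (hx : x = z - γ • ξ) (hzplus : zplus = z - γ • ζ) :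
    ∀ u : EuclideanSpace ℝ (Fin d),
      γ * @inner ℝ _ _ ζ (x - u) ≤
        (1 / 2) * ‖u - z‖ ^ 2 - (1 / 2) * ‖u - zplus‖ ^ 2
          + γ ^ 2 * ‖ξ - ζ‖ ^ 2
          - (1 / 2) * (‖x - z‖ ^ 2 + ‖x - zplus‖ ^ 2) :=
  fun u => (extragradient_identity γ z x zplus ξ ζ u hx hzplus).le

theorem euclidean_extragradient_lemma {d : ℕ}
    (γ : ℝ) (hγ : 0 < γ)
    (z x zplus ξ ζ : EuclideanSpace ℝ (Fin d))
    (hx : x = z - γ • ξ) (hzplus : zplus = z - γ • ζ) :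
    ∀ u : EuclideanSpace ℝ (Fin d),
      γ * @inner ℝ _ _ ζ (x - u) ≤
        (1 / 2) * ‖u - z‖ ^ 2 - (1 / 2) * ‖u - zplus‖ ^ 2
          + γ ^ 2 * ‖ξ - ζ‖ ^ 2
          - (1 / 2) * (‖x - z‖ ^ 2 + ‖x - zplus‖ ^ 2) :=
  euclidean_extragradient_lemma_general γ z x zplus ξ ζ hx hzplus
end

section
/- Let f : ℝ^d → ℝ be differentiable with L-Lipschitz gradient and bounded below, attaining its infimum at x*. Consider the GDE iteration: z₀ = x₀, g₀ = ∇f(x₀), and for t ≥ 1: x_t = z_{t−1} − η g_{t−1}, g_t = ∇f(x_t), z_t = z_{t−1} − η g_t, where 0 < η ≤ 1/(12L). Then (1/T) Σ_{t=1}^T ‖∇f(x_t)‖² ≤ 8(f(x₀) − f(x*))/(ηT) − (1/(η²T)) Σ_{t=0}^{T−1} ‖x_{t+1} − x_t‖², and hence min_{1≤t≤T} ‖∇f(x_t)‖² ≤ 8(f(x₀) − f(x*))/(ηT). -/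
/-!
Lyapunov argument. Put `w t = z t - x (t + 1)`; then `w 0 = 0`, `w t = η ∇f(x t)` for `t ≥ 1`,
and `x (t + 2) - x (t + 1) = w t - 2η ∇f(x (t + 1))`. The descent lemma for `L`-smooth `f`,
together with the expansion of `‖w t‖² = ‖(x (t + 2) - x (t + 1)) + 2η ∇f(x (t + 1))‖²`, shows
that for `4ηL ≤ 1` the potential `8η f(x (t + 1)) + 2‖w t‖²` drops in each step by at least
`6η² ‖∇f(x (t + 1))‖² + ‖x (t + 2) - x (t + 1)‖²`. Telescoping, and bounding the final potential
below by `8η f(x*)`, bounds both sums by `8η (f(x₀) - f(x*))`.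
-/

open Finset
open scoped RealInnerProductSpace

theorem sum_Icc_one_eq_sum_range_succ {M : Type*} [AddCommMonoid M] (g : ℕ → M) (T : ℕ) :
    ∑ t ∈ Icc 1 T, g t = ∑ t ∈ range T, g (t + 1) := by
  rw [range_eq_Ico, sum_Ico_add', zero_add, Ico_add_one_right_eq_Icc]

section Descent

variable {F : Type*} [NormedAddCommGroup F] [InnerProductSpace ℝ F] [CompleteSpace F]
  {f : F → ℝ} {L : ℝ}

theorem Differentiable.le_add_inner_gradient_add_sq (hf : Differentiable ℝ f)
    (hlip : ∀ a b, ‖gradient f a - gradient f b‖ ≤ L * ‖a - b‖) (p q : F) :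
    f q ≤ f p + ⟪gradient f p, q - p⟫ + L / 2 * ‖q - p‖ ^ 2 := by
  set v := q - p
  have hline (t : ℝ) :
      HasDerivAt (fun t : ℝ => f (p + t • v)) ⟪gradient f (p + t • v), v⟫ t := by
    have hγ : HasDerivAt (fun t : ℝ => p + t • v) v t := by
      simpa using ((hasDerivAt_id t).smul_const v).const_add p
    have hcomp := (hf _).hasFDerivAt.comp_hasDerivAt t hγ
    rw [← inner_gradient_left] at hcomp
    exact hcomp
  have hparabola (t : ℝ) :
      HasDerivAt (fun t : ℝ => f p + t * ⟪gradient f p, v⟫ + L / 2 * t ^ 2 * ‖v‖ ^ 2)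
        (⟪gradient f p, v⟫ + L * t * ‖v‖ ^ 2) t := by
    refine ((((hasDerivAt_id' t).mul_const _).const_add (f p)).add
      (((hasDerivAt_pow 2 t).const_mul (L / 2)).mul_const (‖v‖ ^ 2))).congr_deriv ?_
    push_cast; ring
  have hslope {t : ℝ} (ht : 0 ≤ t) :
      ⟪gradient f (p + t • v), v⟫ ≤ ⟪gradient f p, v⟫ + L * t * ‖v‖ ^ 2 :=
    calc ⟪gradient f (p + t • v), v⟫
        = ⟪gradient f p, v⟫ + ⟪gradient f (p + t • v) - gradient f p, v⟫ := by
          rw [inner_sub_left]; ring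
      _ ≤ ⟪gradient f p, v⟫ + ‖gradient f (p + t • v) - gradient f p‖ * ‖v‖ := by
          gcongr; exact real_inner_le_norm _ _
      _ ≤ ⟪gradient f p, v⟫ + L * ‖t • v‖ * ‖v‖ := by
          gcongr; simpa using hlip (p + t • v) p
      _ = ⟪gradient f p, v⟫ + L * t * ‖v‖ ^ 2 := by
          rw [norm_smul, Real.norm_of_nonneg ht]; ring
  have key := image_le_of_deriv_right_le_deriv_boundary
    (fun t _ => (hline t).continuousAt.continuousWithinAt)
    (fun t _ => (hline t).hasDerivWithinAt) (by simp)
    (fun t _ => (hparabola t).continuousAt.continuousWithinAt)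
    (fun t _ => (hparabola t).hasDerivWithinAt) (fun t ht => hslope ht.1)
    (Set.right_mem_Icc.2 zero_le_one)
  simpa [v] using key

theorem Differentiable.gradient_step_descent (hf : Differentiable ℝ f)
    (hlip : ∀ a b, ‖gradient f a - gradient f b‖ ≤ L * ‖a - b‖) {η : ℝ} (hη : 0 ≤ η)
    (hηL : 4 * η * L ≤ 1) {p q u : F} (hq : q - p = u - (2 * η) • gradient f p) :
    8 * η * f q + 8 * η ^ 2 * ‖gradient f p‖ ^ 2 + ‖q - p‖ ^ 2
      ≤ 8 * η * f p + 2 * ‖u‖ ^ 2 := by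
  have hdesc := mul_le_mul_of_nonneg_left (hf.le_add_inner_gradient_add_sq hlip p q)
    (by positivity : 0 ≤ 8 * η)
  have hu : ‖u‖ ^ 2 = ‖q - p‖ ^ 2 + 4 * η * ⟪gradient f p, q - p⟫
      + 4 * η ^ 2 * ‖gradient f p‖ ^ 2 := by
    rw [show u = (q - p) + (2 * η) • gradient f p by rw [hq]; abel, norm_add_sq_real,
      norm_smul, real_inner_smul_right, real_inner_comm, Real.norm_of_nonneg (by positivity)]
    ring
  have hcurv : 4 * η * L * ‖q - p‖ ^ 2 ≤ ‖q - p‖ ^ 2 :=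
    mul_le_of_le_one_left (by positivity) hηL
  linarith

end Descent

section GDE

variable {F : Type*} [NormedAddCommGroup F] [InnerProductSpace ℝ F] [CompleteSpace F]
  {f : F → ℝ} {L η : ℝ} {x z : ℕ → F}

theorem gde_potential_step (hf : Differentiable ℝ f)
    (hlip : ∀ a b, ‖gradient f a - gradient f b‖ ≤ L * ‖a - b‖) (hη : 0 ≤ η)
    (hηL : 4 * η * L ≤ 1)
    (hxup : ∀ t : ℕ, 1 ≤ t → x (t + 1) = z t - η • gradient f (x t))
    (hzup : ∀ t : ℕ, 1 ≤ t → z t = z (t - 1) - η • gradient f (x t)) (t : ℕ) :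
    8 * η * f (x (t + 2)) + 2 * ‖z (t + 1) - x (t + 2)‖ ^ 2
        + (6 * η ^ 2 * ‖gradient f (x (t + 1))‖ ^ 2 + ‖x (t + 2) - x (t + 1)‖ ^ 2)
      ≤ 8 * η * f (x (t + 1)) + 2 * ‖z t - x (t + 1)‖ ^ 2 := by
  have hx := hxup (t + 1) le_add_self
  have hz := hzup (t + 1) le_add_self
  rw [Nat.add_sub_cancel] at hz
  have hw : z (t + 1) - x (t + 2) = η • gradient f (x (t + 1)) := by
    rw [hx]; abel
  have hincr : x (t + 2) - x (t + 1) = (z t - x (t + 1)) - (2 * η) • gradient f (x (t + 1)) := by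
    rw [hx, hz]; module
  have hstep := hf.gradient_step_descent hlip hη hηL hincr
  rw [hw, norm_smul, Real.norm_of_nonneg hη]
  linarith

theorem gde_sum_bound (hf : Differentiable ℝ f)
    (hlip : ∀ a b, ‖gradient f a - gradient f b‖ ≤ L * ‖a - b‖) (hη : 0 ≤ η)
    (hηL : 4 * η * L ≤ 1) {m : ℝ} (hm : ∀ y, m ≤ f y) (hz0 : z 0 = x 0) (hx1 : x 1 = x 0)
    (hxup : ∀ t : ℕ, 1 ≤ t → x (t + 1) = z t - η • gradient f (x t))
    (hzup : ∀ t : ℕ, 1 ≤ t → z t = z (t - 1) - η • gradient f (x t)) (T : ℕ) :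
    6 * η ^ 2 * ∑ t ∈ Icc 1 T, ‖gradient f (x t)‖ ^ 2 + ∑ t ∈ range T, ‖x (t + 1) - x t‖ ^ 2
      ≤ 8 * η * (f (x 0) - m) := by
  set Φ : ℕ → ℝ := fun t => 8 * η * f (x (t + 1)) + 2 * ‖z t - x (t + 1)‖ ^ 2
  have htelescope : ∑ t ∈ range T,
      (6 * η ^ 2 * ‖gradient f (x (t + 1))‖ ^ 2 + ‖x (t + 2) - x (t + 1)‖ ^ 2) ≤ Φ 0 - Φ T := by
    rw [← sum_range_sub']
    exact sum_le_sum fun t _ => by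
      linarith [gde_potential_step hf hlip hη hηL hxup hzup t]
  have hΦ0 : Φ 0 = 8 * η * f (x 0) := by simp [Φ, hz0, hx1]
  have hΦT : 8 * η * m ≤ Φ T := by
    have := mul_le_mul_of_nonneg_left (hm (x (T + 1))) (by positivity : 0 ≤ 8 * η)
    linarith [sq_nonneg ‖z T - x (T + 1)‖]
  have hshift : ∑ t ∈ range T, ‖x (t + 1) - x t‖ ^ 2
      ≤ ∑ t ∈ range T, ‖x (t + 2) - x (t + 1)‖ ^ 2 := by
    have h₁ := sum_range_succ (fun t => ‖x (t + 1) - x t‖ ^ 2) T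
    have h₂ := sum_range_succ' (fun t => ‖x (t + 1) - x t‖ ^ 2) T
    simp only [zero_add, hx1, sub_self, norm_zero] at h₂
    linarith [sq_nonneg ‖x (T + 1) - x T‖]
  rw [sum_Icc_one_eq_sum_range_succ, mul_sum]
  rw [sum_add_distrib] at htelescope
  linarith

end GDE

theorem gde_convergence {d : ℕ}
    (f : EuclideanSpace ℝ (Fin d) → ℝ) (L η : ℝ) (T : ℕ)
    (x z : ℕ → EuclideanSpace ℝ (Fin d)) (xstar : EuclideanSpace ℝ (Fin d))
    (hdiff : Differentiable ℝ f) (hL : 0 < L)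
    (hlip : ∀ a b, ‖gradient f a - gradient f b‖ ≤ L * ‖a - b‖)
    (hmin : ∀ y, f xstar ≤ f y)
    (hη : 0 < η) (hηL : η ≤ 1 / (12 * L))
    (hz0 : z 0 = x 0) (hx1 : x 1 = x 0)
    (hxup : ∀ t : ℕ, 1 ≤ t → x (t + 1) = z t - η • gradient f (x t))
    (hzup : ∀ t : ℕ, 1 ≤ t → z t = z (t - 1) - η • gradient f (x t))
    (hT : 1 ≤ T) :
    (1 / (T : ℝ)) * ∑ t ∈ Finset.Icc 1 T, ‖gradient f (x t)‖ ^ 2 ≤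
        8 * (f (x 0) - f xstar) / (η * T)
          - (1 / (η ^ 2 * T)) * ∑ t ∈ Finset.range T, ‖x (t + 1) - x t‖ ^ 2 ∧
    ∃ t ∈ Finset.Icc 1 T,
      ‖gradient f (x t)‖ ^ 2 ≤ 8 * (f (x 0) - f xstar) / (η * T) := by
  have hηL' : 4 * η * L ≤ 1 := by
    have := (le_div_iff₀ (by positivity)).1 hηL
    linarith
  have hbound := gde_sum_bound hdiff hlip hη.le hηL' hmin hz0 hx1 hxup hzup T
  set G := ∑ t ∈ Icc 1 T, ‖gradient f (x t)‖ ^ 2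
  set S := ∑ t ∈ range T, ‖x (t + 1) - x t‖ ^ 2
  have hTpos : (0 : ℝ) < T := by exact_mod_cast hT
  have hG : 0 ≤ G := sum_nonneg fun t _ => sq_nonneg _
  have havg : 1 / (T : ℝ) * G ≤ 8 * (f (x 0) - f xstar) / (η * T) - 1 / (η ^ 2 * T) * S := by
    have hη2G : η ^ 2 * G ≤ 8 * η * (f (x 0) - f xstar) - S := by
      linarith [mul_nonneg (sq_nonneg η) hG]
    calc 1 / (T : ℝ) * G = η ^ 2 * G / (η ^ 2 * T) := by field_simp
      _ ≤ (8 * η * (f (x 0) - f xstar) - S) / (η ^ 2 * T) := by gcongr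
      _ = _ := by field_simp
  refine ⟨havg, exists_le_of_sum_le ⟨1, by simp [hT]⟩ ?_⟩
  rw [sum_const, Nat.card_Icc, Nat.add_sub_cancel, nsmul_eq_mul]
  have hpenalty : 0 ≤ 1 / (η ^ 2 * T) * S := by positivity
  rw [← div_le_iff₀' hTpos]
  linarith [show G / T = 1 / (T : ℝ) * G by ring]
end
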